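/- Duhamel's formula: for square matrices H(θ) depending smoothly (say, affinely: H(θ) = H₀ + θ·H₁) on a real parameter θ, the derivative of the matrix exponential satisfies ∂_θ exp(-H(θ)) = -∫₀¹ exp(-τ H(θ)) · (∂_θ H(θ)) · exp(-(1-τ) H(θ)) dτ. -/

import Mathlib

/-!
Differentiating `τ ↦ exp (τ • X) * exp ((1 - τ) • Y)` and integrating over `[0, 1]` gives
`exp X - exp Y = ∫₀¹ exp (τ • X) * (X - Y) * exp ((1 - τ) • Y) dτ`. For `X = A + t • B` and
`Y = A + x • B` the integrand is `(t - x)` times a function continuous in `t`, so the difference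
quotient of `t ↦ exp (A + t • B)` at `x` converges to the value of that integral at `t = x`.
-/

open NormedSpace

theorem hasDerivAt_of_sub_eq_smul {𝕜 E : Type*} [NontriviallyNormedField 𝕜]
    [NormedAddCommGroup E] [NormedSpace 𝕜 E] {f g : 𝕜 → E} {x : 𝕜}
    (hfg : ∀ t, f t - f x = (t - x) • g t) (hg : ContinuousAt g x) :
    HasDerivAt f (g x) x := by
  refine hasDerivAt_iff_tendsto_slope.2 (hg.tendsto.mono_left nhdsWithin_le_nhds |>.congr' ?_)
  filter_upwards [self_mem_nhdsWithin] with t ht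
  rw [slope_def_module, hfg, smul_smul, inv_mul_cancel₀ (sub_ne_zero.2 ht), one_smul]

section RealBanachAlgebra

variable {𝔸 : Type*} [NormedRing 𝔸] [NormedAlgebra ℝ 𝔸] [CompleteSpace 𝔸]

@[fun_prop]
theorem continuous_exp_of_normedAlgebra_real : Continuous (exp : 𝔸 → 𝔸) :=
  continuous_iff_continuousAt.2 fun X => (exp_analytic (𝕂 := ℝ) X).continuousAt

theorem hasDerivAt_exp_smul_mul_exp_one_sub_smul (X Y : 𝔸) (τ : ℝ) :
    HasDerivAt (fun τ : ℝ => exp (τ • X) * exp ((1 - τ) • Y))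
      (exp (τ • X) * (X - Y) * exp ((1 - τ) • Y)) τ := by
  have hY : HasDerivAt (fun τ : ℝ => exp ((1 - τ) • Y)) (-(exp ((1 - τ) • Y) * Y)) τ := by
    simpa [Function.comp_def] using (hasDerivAt_exp_smul_const Y (1 - τ)).scomp τ
      ((hasDerivAt_id τ).const_sub 1)
  refine ((hasDerivAt_exp_smul_const X τ).mul hY).congr_deriv ?_
  rw [((Commute.refl Y).smul_left (1 - τ)).exp_left.eq]
  noncomm_ring

theorem exp_sub_exp_eq_integral (X Y : 𝔸) :
    exp X - exp Y = ∫ τ in (0 : ℝ)..1, exp (τ • X) * (X - Y) * exp ((1 - τ) • Y) := by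
  rw [intervalIntegral.integral_eq_sub_of_hasDerivAt
    (fun τ _ => hasDerivAt_exp_smul_mul_exp_one_sub_smul X Y τ)
    (Continuous.intervalIntegrable (by fun_prop) 0 1)]
  simp

theorem hasDerivAt_exp_add_smul (A B : 𝔸) (x : ℝ) :
    HasDerivAt (fun t : ℝ => exp (A + t • B))
      (∫ τ in (0 : ℝ)..1, exp (τ • (A + x • B)) * B * exp ((1 - τ) • (A + x • B))) x := by
  refine hasDerivAt_of_sub_eq_smul (g := fun t => ∫ τ in (0 : ℝ)..1,
    exp (τ • (A + t • B)) * B * exp ((1 - τ) • (A + x • B))) (fun t => ?_) ?_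
  · rw [exp_sub_exp_eq_integral, ← intervalIntegral.integral_smul]
    congr 1 with τ
    rw [add_sub_add_left_eq_sub, ← sub_smul, mul_smul_comm, smul_mul_assoc]
  · exact (intervalIntegral.continuous_parametric_intervalIntegral_of_continuous'
      (by fun_prop) 0 1).continuousAt

end RealBanachAlgebra

attribute [local instance] Matrix.linftyOpNormedRing Matrix.linftyOpNormedAlgebra

/-- Duhamel's formula for the derivative of the matrix exponential along an
affine family `H(θ) = H₀ + θ • H₁`. -/
theorem duhamel_formula (n : ℕ) (H₀ H₁ : Matrix (Fin n) (Fin n) ℂ) (θ : ℝ) :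
    HasDerivAt (fun t : ℝ => NormedSpace.exp (-(H₀ + (t : ℂ) • H₁)))
      (-∫ τ in (0:ℝ)..1,
          NormedSpace.exp ((-(τ : ℂ)) • (H₀ + (θ : ℂ) • H₁)) * H₁ *
            NormedSpace.exp ((-((1 : ℂ) - (τ : ℂ))) • (H₀ + (θ : ℂ) • H₁)))
      θ := by
  have h := hasDerivAt_exp_add_smul (-H₀) (-H₁) θ
  simp only [smul_neg, ← neg_add, mul_neg, neg_mul, intervalIntegral.integral_neg] at h
  simp only [← neg_smul] at h
  simp only [← Complex.ofReal_neg, ← Complex.ofReal_one, ← Complex.ofReal_sub,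
    Complex.coe_smul]
  exact h
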